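/- arXiv:0912.3183 — 2 statements merged into one kernel-verified Lean document; each statement's English description precedes it below -/
import Mathlib

section
/- On the interval [a,b] with 0 < a < b, the eigenvalues of the Berry-Keating operator H_BK = -i(x d/dx + 1/2) with boundary condition ψ(a) = √(b/a) e^{-2πic} ψ(b) (c ∈ [0,1)) are exactly k_n = 2π(n + c)/ln(b/a) for n ∈ ℤ, with eigenfunctions ψ_n(x) = x^{-1/2} e^{i k_n ln x}. -/
open Real Complex Set

/-!
On `[a, b] ⊂ (0, ∞)` the eigenvalue equation is the linear ODE `x ψ' = (-1/2 + i k) ψ`, whose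
solutions are the multiples of `exp ((-1/2 + i k) log x)`: multiplying by
`exp ((1/2 - i k) log x)` gives a function with zero derivative. In the boundary condition the
factor `√(b/a)` exactly compensates the modulus `(b/a)^{1/2}` of that function, leaving
`exp (-i k log (b/a)) = exp (-2π i c)`, i.e. `k log (b/a) ∈ 2π (c + ℤ)`.
-/

theorem hasDerivAt_cexp_mul_log (α : ℂ) {x : ℝ} (hx : 0 < x) :
    HasDerivAt (fun y : ℝ => cexp (α * Real.log y)) (α / x * cexp (α * Real.log x)) x := by
  have hlog : HasDerivAt (fun y : ℝ => (Real.log y : ℂ)) ((x⁻¹ : ℝ) : ℂ) x :=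
    (Real.hasDerivAt_log hx.ne').ofReal_comp
  convert (hlog.const_mul α).cexp using 1
  push_cast
  ring

theorem neg_I_mul_add_half_eq_iff {x : ℝ} (hx : x ≠ 0) (k : ℝ) (ψ ψ' : ℂ) :
    -I * (x * ψ' + ψ / 2) = k * ψ ↔ ψ' = (-(1 / 2) + I * k) / x * ψ := by
  have hx' : (x : ℂ) ≠ 0 := ofReal_ne_zero.mpr hx
  constructor
  · intro h
    field_simp
    linear_combination 2 * I * h + (2 * x * ψ' + ψ) * I_sq
  · rintro rfl
    field_simp
    linear_combination (-(2 * (k : ℂ) * ψ)) * I_sq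

theorem exists_eqOn_const_mul_cexp_mul_log {a b : ℝ} (ha : 0 < a) {α : ℂ} {ψ : ℝ → ℂ}
    (hψ : ∀ x ∈ Icc a b, HasDerivWithinAt ψ (α / x * ψ x) (Icc a b) x) :
    ∃ C : ℂ, ∀ x ∈ Icc a b, ψ x = C * cexp (α * Real.log x) := by
  set φ : ℝ → ℂ := fun x => ψ x * cexp (-α * Real.log x)
  have hφ : ∀ x ∈ Icc a b, HasDerivWithinAt φ 0 (Icc a b) x := fun x hx =>
    ((hψ x hx).mul (hasDerivAt_cexp_mul_log (-α) (ha.trans_le hx.1)).hasDerivWithinAt).congr_deriv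
      (by ring)
  have hconst := constant_of_has_deriv_right_zero (fun x hx => (hφ x hx).continuousWithinAt)
    fun x hx => (hφ x (Ico_subset_Icc_self hx)).mono_of_mem_nhdsWithin
      (Icc_mem_nhdsGE_of_mem hx)
  refine ⟨φ a, fun x hx => ?_⟩
  rw [← hconst x hx, mul_assoc, ← Complex.exp_add]
  simp

theorem cexp_neg_I_mul_eq_cexp_iff {c k L : ℝ} (hL : L ≠ 0) :
    cexp (-(I * k * L)) = cexp (-(2 * π * I * c)) ↔ ∃ n : ℤ, k = 2 * π * (n + c) / L := by
  rw [exp_eq_exp_iff_exists_int]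
  refine (Equiv.neg ℤ).exists_congr_left.trans (exists_congr fun n => ?_)
  rw [eq_div_iff hL, ← ofReal_inj, ← mul_right_inj' I_ne_zero]
  simp only [Equiv.neg_symm, Equiv.neg_apply, Int.cast_neg]
  push_cast
  constructor <;> intro h
  · linear_combination h + (k * L - 2 * π * c - 2 * π * n) * I_sq
  · linear_combination (-I ^ 2) * h

theorem cexp_mul_log_eq_sqrt_mul_iff {a b : ℝ} (ha : 0 < a) (hab : a < b) (c k : ℝ) :
    cexp ((-(1 / 2) + I * k) * Real.log a) =
        (√(b / a) : ℂ) * cexp (-(2 * π * I * c)) * cexp ((-(1 / 2) + I * k) * Real.log b) ↔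
      ∃ n : ℤ, k = 2 * π * (n + c) / Real.log (b / a) := by
  have hba : 0 < b / a := div_pos (ha.trans hab) ha
  have hsqrt : (√(b / a) : ℂ) = cexp (Real.log (b / a) / 2) := by
    rw [← Real.exp_log (Real.sqrt_pos.2 hba), Real.log_sqrt hba.le, ofReal_exp]
    push_cast; ring_nf
  have hlog_a : (Real.log a : ℂ) = Real.log b - Real.log (b / a) := by
    rw [Real.log_div (ha.trans hab).ne' ha.ne']; push_cast; ring
  set L := Real.log (b / a)
  set E := cexp (L / 2) * cexp ((-(1 / 2) + I * k) * Real.log b)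
  have hlhs : cexp ((-(1 / 2) + I * k) * Real.log a) = E * cexp (-(I * k * L)) := by
    simp only [E, hlog_a, ← Complex.exp_add]; ring_nf
  have hrhs : (√(b / a) : ℂ) * cexp (-(2 * π * I * c)) * cexp ((-(1 / 2) + I * k) * Real.log b) =
      E * cexp (-(2 * π * I * c)) := by
    rw [hsqrt]; ring
  rw [hlhs, hrhs, mul_right_inj' (mul_ne_zero (Complex.exp_ne_zero _) (Complex.exp_ne_zero _))]
  exact cexp_neg_I_mul_eq_cexp_iff (Real.log_pos ((one_lt_div ha).2 hab)).ne'

theorem stmt_15_general (a b c : ℝ) (ha : 0 < a) (hab : a < b)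
    (k : ℝ) :
    ((∃ ψ ψ' : ℝ → ℂ,
        (∃ x ∈ Set.Icc a b, ψ x ≠ 0) ∧
        (∀ x ∈ Set.Icc a b,
          HasDerivWithinAt ψ (ψ' x) (Set.Icc a b) x ∧
          -Complex.I * ((x : ℂ) * ψ' x + ψ x / 2) = (k : ℂ) * ψ x) ∧
        ψ a = (Real.sqrt (b / a) : ℂ) *
          Complex.exp (-(2 * π * Complex.I * c)) * ψ b)
      ↔ ∃ n : ℤ, k = 2 * π * (n + c) / Real.log (b / a)) ∧
    -- the explicit eigenfunctions ψ_n(x) = x^{-1/2} e^{i k_n log x}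
    (∀ n : ℤ,
      let kn : ℝ := 2 * π * (n + c) / Real.log (b / a)
      let ψn : ℝ → ℂ := fun y =>
        Complex.exp ((-(1 / 2) + Complex.I * kn) * (Real.log y : ℂ))
      (∀ x ∈ Set.Icc a b,
        HasDerivWithinAt ψn ((-(1 / 2) + Complex.I * kn) / (x : ℂ) * ψn x)
          (Set.Icc a b) x ∧
        -Complex.I * ((x : ℂ) * ((-(1 / 2) + Complex.I * kn) / (x : ℂ) * ψn x)
            + ψn x / 2) = (kn : ℂ) * ψn x) ∧
      ψn a = (Real.sqrt (b / a) : ℂ) *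
        Complex.exp (-(2 * π * Complex.I * c)) * ψn b) := by
  have hpos : ∀ x ∈ Icc a b, 0 < x := fun x hx => ha.trans_le hx.1
  have eigenfunction (κ : ℝ) : ∀ x ∈ Icc a b,
      HasDerivWithinAt (fun y : ℝ => cexp ((-(1 / 2) + I * κ) * Real.log y))
        ((-(1 / 2) + I * κ) / x * cexp ((-(1 / 2) + I * κ) * Real.log x)) (Icc a b) x ∧
      -I * (x * ((-(1 / 2) + I * κ) / x * cexp ((-(1 / 2) + I * κ) * Real.log x)) +
        cexp ((-(1 / 2) + I * κ) * Real.log x) / 2) =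
        κ * cexp ((-(1 / 2) + I * κ) * Real.log x) := fun x hx =>
    ⟨(hasDerivAt_cexp_mul_log _ (hpos x hx)).hasDerivWithinAt,
      (neg_I_mul_add_half_eq_iff (hpos x hx).ne' κ _ _).2 rfl⟩
  refine ⟨⟨?_, ?_⟩, fun n =>
    ⟨eigenfunction _, (cexp_mul_log_eq_sqrt_mul_iff ha hab c _).2 ⟨n, rfl⟩⟩⟩
  · rintro ⟨ψ, ψ', ⟨x₀, hx₀, hψx₀⟩, hψ, hbc⟩
    obtain ⟨C, hC⟩ := exists_eqOn_const_mul_cexp_mul_log ha fun x hx =>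
      (neg_I_mul_add_half_eq_iff (hpos x hx).ne' k _ _).1 (hψ x hx).2 ▸ (hψ x hx).1
    have hC0 : C ≠ 0 := by rintro rfl; simp [hC x₀ hx₀] at hψx₀
    rw [hC a (left_mem_Icc.2 hab.le), hC b (right_mem_Icc.2 hab.le)] at hbc
    exact (cexp_mul_log_eq_sqrt_mul_iff ha hab c k).1
      (mul_left_cancel₀ hC0 (by linear_combination hbc))
  · rintro ⟨n, rfl⟩
    exact ⟨_, _, ⟨a, left_mem_Icc.2 hab.le, Complex.exp_ne_zero _⟩, eigenfunction _,
      (cexp_mul_log_eq_sqrt_mul_iff ha hab c _).2 ⟨n, rfl⟩⟩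

/-- On `[a,b]` with `0 < a < b`, the eigenvalues of
`H_BK = -i(x d/dx + 1/2)` with boundary condition
`ψ(a) = √(b/a) e^{-2πic} ψ(b)` are exactly `k_n = 2π(n+c)/log(b/a)`,
`n ∈ ℤ`, with eigenfunctions `ψ_n(x) = x^{-1/2} e^{i k_n log x}`. -/
theorem stmt_15 (a b c : ℝ) (ha : 0 < a) (hab : a < b)
    (hc : c ∈ Set.Ico (0 : ℝ) 1) (k : ℝ) :
    ((∃ ψ ψ' : ℝ → ℂ,
        (∃ x ∈ Set.Icc a b, ψ x ≠ 0) ∧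
        (∀ x ∈ Set.Icc a b,
          HasDerivWithinAt ψ (ψ' x) (Set.Icc a b) x ∧
          -Complex.I * ((x : ℂ) * ψ' x + ψ x / 2) = (k : ℂ) * ψ x) ∧
        ψ a = (Real.sqrt (b / a) : ℂ) *
          Complex.exp (-(2 * π * Complex.I * c)) * ψ b)
      ↔ ∃ n : ℤ, k = 2 * π * (n + c) / Real.log (b / a)) ∧
    -- the explicit eigenfunctions ψ_n(x) = x^{-1/2} e^{i k_n log x}
    (∀ n : ℤ,
      let kn : ℝ := 2 * π * (n + c) / Real.log (b / a)
      let ψn : ℝ → ℂ := fun y =>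
        Complex.exp ((-(1 / 2) + Complex.I * kn) * (Real.log y : ℂ))
      (∀ x ∈ Set.Icc a b,
        HasDerivWithinAt ψn ((-(1 / 2) + Complex.I * kn) / (x : ℂ) * ψn x)
          (Set.Icc a b) x ∧
        -Complex.I * ((x : ℂ) * ((-(1 / 2) + Complex.I * kn) / (x : ℂ) * ψn x)
            + ψn x / 2) = (kn : ℂ) * ψn x) ∧
      ψn a = (Real.sqrt (b / a) : ℂ) *
        Complex.exp (-(2 * π * Complex.I * c)) * ψn b) :=
  stmt_15_general a b c ha hab k
end

section
/- For 0 < a < b, the positive eigenvalues λ = k² of the operator H² ψ = -x²ψ'' - 2xψ' - ψ/4 on [a,b] with Dirichlet boundary conditions ψ(a) = ψ(b) = 0 are exactly k_n = πn/ln(b/a), n ∈ ℕ, n ≥ 1, with eigenfunctions ψ_n(x) = x^{-1/2} sin(k_n ln(x/a)); moreover λ = 0 is not an eigenvalue. -/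
/-!
The substitution `ψ(x) = x^{-1/2} g(log(x/a))` turns `-x²ψ'' - 2xψ' - ψ/4 = λψ` into `-g'' = λg`,
so for `λ = k²` it produces the solutions `x^{-1/2} sin(k log(x/a))` and `x^{-1/2} cos(k log(x/a))`,
and for `λ = 0` the solutions `x^{-1/2} log(x/a)` and `x^{-1/2}`. Since the operator is
`-(x²ψ')' - ψ/4`, the Wronskian `x²(ψu' - ψ'u)` of two solutions is constant. Comparing an
eigenfunction with the solution `u` that vanishes at `a` and with a second, independent solution
shows that the eigenfunction is a multiple of `u`; hence `u(b) = 0`, which reads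
`sin(k log(b/a)) = 0`, resp. `log(b/a) = 0`.
-/

open Real Complex

/-- `λ` is a Dirichlet eigenvalue of `H² ψ = -x²ψ'' - 2xψ' - ψ/4` on `[a,b]`:
there is a nonzero `C²` function `ψ` on `[a,b]` with
`-x²ψ'' - 2xψ' - ψ/4 = λψ` and `ψ(a) = ψ(b) = 0`. -/
def IsDirichletEigenvalue (a b : ℝ) (lam : ℂ) : Prop :=
  ∃ ψ ψ' ψ'' : ℝ → ℂ,
    (∃ x ∈ Set.Icc a b, ψ x ≠ 0) ∧
    (∀ x ∈ Set.Icc a b,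
      HasDerivWithinAt ψ (ψ' x) (Set.Icc a b) x ∧
      HasDerivWithinAt ψ' (ψ'' x) (Set.Icc a b) x ∧
      -(x : ℂ) ^ 2 * ψ'' x - 2 * (x : ℂ) * ψ' x - ψ x / 4 = lam * ψ x) ∧
    ψ a = 0 ∧ ψ b = 0

open Set

def IsEigensolutionOn (s : Set ℝ) (lam : ℂ) (ψ ψ' ψ'' : ℝ → ℂ) : Prop :=
  ∀ x ∈ s, HasDerivWithinAt ψ (ψ' x) s x ∧ HasDerivWithinAt ψ' (ψ'' x) s x ∧
    -(x : ℂ) ^ 2 * ψ'' x - 2 * (x : ℂ) * ψ' x - ψ x / 4 = lam * ψ x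

def wronskian (ψ ψ' u u' : ℝ → ℂ) (x : ℝ) : ℂ := (x : ℂ) ^ 2 * (ψ x * u' x - ψ' x * u x)

namespace IsEigensolutionOn

variable {s t : Set ℝ} {lam : ℂ} {ψ ψ' ψ'' : ℝ → ℂ}

theorem mono (h : IsEigensolutionOn t lam ψ ψ' ψ'') (hst : s ⊆ t) :
    IsEigensolutionOn s lam ψ ψ' ψ'' := fun x hx =>
  let ⟨h₁, h₂, h₃⟩ := h x (hst hx)
  ⟨h₁.mono hst, h₂.mono hst, h₃⟩

theorem congr {φ : ℝ → ℂ} (h : IsEigensolutionOn s lam ψ ψ' ψ'') (hφ : EqOn φ ψ s) :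
    IsEigensolutionOn s lam φ ψ' ψ'' := fun x hx =>
  let ⟨h₁, h₂, h₃⟩ := h x hx
  ⟨h₁.congr hφ (hφ hx), h₂, by rwa [hφ hx]⟩

variable {a b : ℝ} {u u' u'' v v' v'' : ℝ → ℂ}

theorem wronskian_eq (hψ : IsEigensolutionOn (Icc a b) lam ψ ψ' ψ'')
    (hu : IsEigensolutionOn (Icc a b) lam u u' u'') :
    ∀ x ∈ Icc a b, wronskian ψ ψ' u u' x = wronskian ψ ψ' u u' a := by
  have hderiv : ∀ x ∈ Icc a b, HasDerivWithinAt (wronskian ψ ψ' u u') 0 (Icc a b) x := by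
    intro x hx
    obtain ⟨hψ₁, hψ₂, hψ₃⟩ := hψ x hx
    obtain ⟨hu₁, hu₂, hu₃⟩ := hu x hx
    have hsq : HasDerivWithinAt (fun y : ℝ => (y : ℂ) ^ 2) (2 * (x : ℂ)) (Icc a b) x := by
      simpa using ((hasDerivAt_id x).ofReal_comp.fun_pow 2).hasDerivWithinAt
    refine (hsq.fun_mul ((hψ₁.fun_mul hu₂).fun_sub (hψ₂.fun_mul hu₁))).congr_deriv ?_
    linear_combination u x * hψ₃ - ψ x * hu₃
  exact constant_of_has_deriv_right_zero (fun x hx => (hderiv x hx).continuousWithinAt)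
    fun x hx => (hderiv x (Ico_subset_Icc_self hx)).mono_of_mem_nhdsWithin
      (Icc_mem_nhdsGE_of_mem hx)

theorem exists_eqOn_const_mul (hψ : IsEigensolutionOn (Icc a b) lam ψ ψ' ψ'')
    (hu : IsEigensolutionOn (Icc a b) lam u u' u'')
    (hv : IsEigensolutionOn (Icc a b) lam v v' v'')
    (hψa : ψ a = 0) (hua : u a = 0) (hvu : wronskian v v' u u' a ≠ 0) :
    ∃ C : ℂ, EqOn ψ (fun x => C * u x) (Icc a b) := by
  refine ⟨-wronskian ψ ψ' v v' a / wronskian v v' u u' a, fun x hx => ?_⟩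
  have hψu := hψ.wronskian_eq hu x hx
  have hψv := hψ.wronskian_eq hv x hx
  have hvu' := hv.wronskian_eq hu x hx
  simp only [wronskian, hψa, hua] at hψu hψv hvu' hvu ⊢
  rw [div_mul_eq_mul_div, eq_div_iff hvu]
  linear_combination v x * hψu - u x * hψv - ψ x * hvu'

end IsEigensolutionOn

theorem IsDirichletEigenvalue.eq_zero_of_wronskian_ne_zero {a b : ℝ} {lam : ℂ}
    {u u' u'' v v' v'' : ℝ → ℂ} (heig : IsDirichletEigenvalue a b lam) (hab : a ≤ b)
    (hu : IsEigensolutionOn (Icc a b) lam u u' u'')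
    (hv : IsEigensolutionOn (Icc a b) lam v v' v'')
    (hua : u a = 0) (hvu : wronskian v v' u u' a ≠ 0) : u b = 0 := by
  obtain ⟨ψ, ψ', ψ'', ⟨x₀, hx₀, hψx₀⟩, hψ, hψa, hψb⟩ := heig
  obtain ⟨C, hC⟩ := IsEigensolutionOn.exists_eqOn_const_mul hψ hu hv hψa hua hvu
  have hC0 : C ≠ 0 := fun h => hψx₀ (by simpa [h] using hC hx₀)
  have hCub : C * u b = 0 := (hC (right_mem_Icc.2 hab)).symm.trans hψb
  exact (mul_eq_zero.1 hCub).resolve_left hC0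

noncomputable def compLogMulRpow (g : ℝ → ℝ) (a r x : ℝ) : ℝ := g (Real.log (x / a)) * x ^ r

theorem hasDerivAt_compLogMulRpow {g g' : ℝ → ℝ} {a r x : ℝ}
    (hg : HasDerivAt g (g' (Real.log (x / a))) (Real.log (x / a))) (ha : a ≠ 0) (hx : 0 < x) :
    HasDerivAt (compLogMulRpow g a r)
      (compLogMulRpow (fun t => g' t + r * g t) a (r - 1) x) x := by
  have hlog : HasDerivAt (fun y => Real.log (y / a)) x⁻¹ x := by
    refine (((hasDerivAt_id' x).div_const a).log (div_ne_zero hx.ne' ha)).congr_deriv ?_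
    field_simp
  refine ((hg.comp x hlog).mul (hasDerivAt_rpow_const (p := r) (Or.inl hx.ne'))).congr_deriv ?_
  simp only [compLogMulRpow, Function.comp_apply, rpow_sub_one hx.ne']
  field_simp

theorem isEigensolutionOn_compLogMulRpow {g g' g'' : ℝ → ℝ} {μ a : ℝ}
    (hg : ∀ t, HasDerivAt g (g' t) t) (hg' : ∀ t, HasDerivAt g' (g'' t) t)
    (hgμ : ∀ t, g'' t = -μ * g t) (ha : a ≠ 0) :
    IsEigensolutionOn (Ioi 0) μ (fun x => (compLogMulRpow g a (-1/2) x : ℂ))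
      (fun x => (compLogMulRpow (fun t => g' t + (-1/2) * g t) a (-1/2 - 1) x : ℂ))
      (fun x => (compLogMulRpow
        (fun t => g'' t + (-1/2) * g' t + (-1/2 - 1) * (g' t + (-1/2) * g t))
        a (-1/2 - 1 - 1) x : ℂ)) := by
  intro x hx
  have hg₁ : ∀ t, HasDerivAt (fun t => g' t + (-1/2) * g t) (g'' t + (-1/2) * g' t) t :=
    fun t => (hg' t).add ((hg t).const_mul _)
  refine ⟨(hasDerivAt_compLogMulRpow (hg _) ha hx).ofReal_comp.hasDerivWithinAt,
    (hasDerivAt_compLogMulRpow (hg₁ _) ha hx).ofReal_comp.hasDerivWithinAt, ?_⟩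
  have hx0 : x ≠ 0 := ne_of_gt hx
  have key : -x ^ 2 * compLogMulRpow (fun t => g'' t + (-1/2) * g' t
        + (-1/2 - 1) * (g' t + (-1/2) * g t)) a (-1/2 - 1 - 1) x
      - 2 * x * compLogMulRpow (fun t => g' t + (-1/2) * g t) a (-1/2 - 1) x
      - compLogMulRpow g a (-1/2) x / 4 = μ * compLogMulRpow g a (-1/2) x := by
    simp only [compLogMulRpow, rpow_sub_one hx0, hgμ]
    field_simp
    ring
  beta_reduce
  exact_mod_cast key

theorem IsDirichletEigenvalue.apply_log_div_eq_zero {a b μ : ℝ} {f f' f'' g g' g'' : ℝ → ℝ}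
    (heig : IsDirichletEigenvalue a b μ) (ha : 0 < a) (hab : a ≤ b)
    (hf : ∀ t, HasDerivAt f (f' t) t) (hf' : ∀ t, HasDerivAt f' (f'' t) t)
    (hfμ : ∀ t, f'' t = -μ * f t) (hf0 : f 0 = 0) (hf'0 : f' 0 ≠ 0)
    (hg : ∀ t, HasDerivAt g (g' t) t) (hg' : ∀ t, HasDerivAt g' (g'' t) t)
    (hgμ : ∀ t, g'' t = -μ * g t) (hg0 : g 0 ≠ 0) :
    f (Real.log (b / a)) = 0 := by
  have hIcc : Icc a b ⊆ Ioi 0 := fun x hx => ha.trans_le hx.1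
  have hub := heig.eq_zero_of_wronskian_ne_zero hab
    ((isEigensolutionOn_compLogMulRpow hf hf' hfμ ha.ne').mono hIcc)
    ((isEigensolutionOn_compLogMulRpow hg hg' hgμ ha.ne').mono hIcc)
    (by simp [compLogMulRpow, div_self ha.ne', hf0])
    (by simp [wronskian, compLogMulRpow, hf0, hf'0, hg0, ha.ne',
      (rpow_pos_of_pos ha _).ne'])
  simpa [compLogMulRpow, (rpow_pos_of_pos (ha.trans_le hab) _).ne'] using hub

theorem hasDerivAt_sin_const_mul (k t : ℝ) :
    HasDerivAt (fun t => Real.sin (k * t)) (k * Real.cos (k * t)) t := by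
  simpa [mul_comm] using ((hasDerivAt_id t).const_mul k).sin

theorem hasDerivAt_cos_const_mul (k t : ℝ) :
    HasDerivAt (fun t => Real.cos (k * t)) (-(k * Real.sin (k * t))) t := by
  simpa [mul_comm] using ((hasDerivAt_id t).const_mul k).cos

theorem hasDerivAt_const_mul_cos_const_mul (k t : ℝ) :
    HasDerivAt (fun t => k * Real.cos (k * t)) (-k ^ 2 * Real.sin (k * t)) t := by
  simpa [pow_two, mul_assoc] using (hasDerivAt_cos_const_mul k t).const_mul k

theorem exists_nat_of_isDirichletEigenvalue_sq {a b k : ℝ} (ha : 0 < a) (hab : a < b)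
    (hk : 0 < k) (heig : IsDirichletEigenvalue a b ((k : ℂ) ^ 2)) :
    ∃ n : ℕ, 1 ≤ n ∧ k = π * n / Real.log (b / a) := by
  have hL : 0 < Real.log (b / a) := Real.log_pos ((one_lt_div ha).2 hab)
  have hsin : Real.sin (k * Real.log (b / a)) = 0 :=
    IsDirichletEigenvalue.apply_log_div_eq_zero (μ := k ^ 2) (by exact_mod_cast heig) ha hab.le
      (hasDerivAt_sin_const_mul k) (hasDerivAt_const_mul_cos_const_mul k)
      (fun _ => rfl) (by simp) (by simp [hk.ne'])
      (hasDerivAt_cos_const_mul k)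
      (fun t => by
        simpa [pow_two, mul_assoc] using ((hasDerivAt_sin_const_mul k t).const_mul k).fun_neg)
      (fun _ => rfl) (by simp)
  obtain ⟨m, hm⟩ := Real.sin_eq_zero_iff.1 hsin
  have hm0 : 0 < m := by
    have : 0 < (m : ℝ) * π := hm ▸ mul_pos hk hL
    exact_mod_cast pos_of_mul_pos_left this pi_pos.le
  lift m to ℕ using hm0.le
  refine ⟨m, by exact_mod_cast hm0, ?_⟩
  rw [eq_div_iff hL.ne']
  push_cast at hm
  linarith

theorem not_isDirichletEigenvalue_zero {a b : ℝ} (ha : 0 < a) (hab : a < b) :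
    ¬ IsDirichletEigenvalue a b 0 := fun heig =>
  (Real.log_pos ((one_lt_div ha).2 hab)).ne' <|
    IsDirichletEigenvalue.apply_log_div_eq_zero (μ := 0) (by exact_mod_cast heig) ha hab.le
      (f := id) hasDerivAt_id (hasDerivAt_const · 1) (by simp) rfl one_ne_zero
      (g := fun _ => 1) (hasDerivAt_const · 1) (hasDerivAt_const · 0) (by simp) one_ne_zero

theorem isEigensolutionOn_sin_mul_log_div_sqrt {a : ℝ} (ha : a ≠ 0) (k : ℝ) :
    ∃ ψ' ψ'' : ℝ → ℂ, IsEigensolutionOn (Ioi 0) ((k : ℂ) ^ 2)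
      (fun x => ((Real.sin (k * Real.log (x / a)) / √x : ℝ) : ℂ)) ψ' ψ'' := by
  have h := isEigensolutionOn_compLogMulRpow (μ := k ^ 2) (hasDerivAt_sin_const_mul k)
    (hasDerivAt_const_mul_cos_const_mul k) (fun _ => rfl) ha
  rw [Complex.ofReal_pow] at h
  refine ⟨_, _, h.congr fun x (hx : 0 < x) => ?_⟩
  simp only [compLogMulRpow]
  rw [sqrt_eq_rpow, div_eq_mul_inv, ← rpow_neg hx.le]
  norm_num

theorem exists_sin_mul_log_div_sqrt_ne_zero {a b k : ℝ} (ha : 0 < a) (hab : a ≤ b)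
    (hk : 0 < k) (hkL : π ≤ 2 * k * Real.log (b / a)) :
    ∃ x ∈ Icc a b, Real.sin (k * Real.log (x / a)) / √x ≠ 0 := by
  have hlog : Real.log (a * Real.exp (π / (2 * k)) / a) = π / (2 * k) := by
    rw [mul_div_cancel_left₀ _ ha.ne', Real.log_exp]
  refine ⟨a * Real.exp (π / (2 * k)),
    ⟨le_mul_of_one_le_right ha.le (Real.one_le_exp (by positivity)), ?_⟩, ?_⟩
  · calc a * Real.exp (π / (2 * k)) ≤ a * Real.exp (Real.log (b / a)) := by
          gcongr
          rw [div_le_iff₀ (by positivity)]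
          linarith
      _ = b := by rw [Real.exp_log (div_pos (ha.trans_le hab) ha), mul_div_cancel₀ _ ha.ne']
  · rw [hlog, show k * (π / (2 * k)) = π / 2 by field_simp, Real.sin_pi_div_two]
    exact div_ne_zero one_ne_zero (Real.sqrt_pos.2 (by positivity)).ne'

def IsDirichletEigenfunction (a b : ℝ) (lam : ℂ) (ψ : ℝ → ℂ) : Prop :=
  (∃ ψ' ψ'' : ℝ → ℂ, IsEigensolutionOn (Icc a b) lam ψ ψ' ψ'') ∧
    (∃ x ∈ Icc a b, ψ x ≠ 0) ∧ ψ a = 0 ∧ ψ b = 0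

theorem IsDirichletEigenfunction.isDirichletEigenvalue {a b : ℝ} {lam : ℂ} {ψ : ℝ → ℂ}
    (h : IsDirichletEigenfunction a b lam ψ) : IsDirichletEigenvalue a b lam :=
  let ⟨⟨ψ', ψ'', hψ⟩, hne, hψa, hψb⟩ := h
  ⟨ψ, ψ', ψ'', hne, hψ, hψa, hψb⟩

theorem isDirichletEigenfunction_sin_mul_log_div_sqrt {a b k : ℝ} {n : ℕ} (ha : 0 < a)
    (hab : a ≤ b) (hn : 1 ≤ n) (hkn : k * Real.log (b / a) = n * π) :
    IsDirichletEigenfunction a b ((k : ℂ) ^ 2)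
      (fun x => ((Real.sin (k * Real.log (x / a)) / √x : ℝ) : ℂ)) := by
  have hn' : (1 : ℝ) ≤ n := by exact_mod_cast hn
  have hL : 0 ≤ Real.log (b / a) := Real.log_nonneg ((one_le_div ha).2 hab)
  have hk : 0 < k := pos_of_mul_pos_left (hkn ▸ by positivity) hL
  obtain ⟨ψ', ψ'', hψ⟩ := isEigensolutionOn_sin_mul_log_div_sqrt ha.ne' k
  obtain ⟨x, hx, hψx⟩ := exists_sin_mul_log_div_sqrt_ne_zero ha hab hk
    (by rw [mul_assoc, hkn]; nlinarith [pi_pos])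
  refine ⟨⟨ψ', ψ'', hψ.mono fun x hx => ha.trans_le hx.1⟩, ⟨x, hx, ofReal_ne_zero.2 hψx⟩,
    by simp [div_self ha.ne'], ?_⟩
  simp only [hkn, Real.sin_nat_mul_pi, zero_div, ofReal_zero]

/-- For `0 < a < b`, the positive eigenvalues `λ = k²` (`k > 0`) of the
"squared" Berry-Keating operator on `[a,b]` with Dirichlet boundary
conditions are exactly `k_n = πn/log(b/a)`, `n ≥ 1`, with eigenfunctions
`ψ_n(x) = x^{-1/2} sin(k_n log(x/a))`; moreover `λ = 0` is not an
eigenvalue. -/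
theorem stmt_16 (a b : ℝ) (ha : 0 < a) (hab : a < b) :
    (∀ k : ℝ, 0 < k →
      (IsDirichletEigenvalue a b ((k : ℂ) ^ 2)
        ↔ ∃ n : ℕ, 1 ≤ n ∧ k = π * n / Real.log (b / a))) ∧
    -- the explicit eigenfunctions ψ_n(x) = x^{-1/2} sin(k_n log(x/a))
    (∀ n : ℕ, 1 ≤ n →
      let kn : ℝ := π * n / Real.log (b / a)
      let ψn : ℝ → ℂ := fun x =>
        ((Real.sin (kn * Real.log (x / a)) / Real.sqrt x : ℝ) : ℂ)
      (∃ ψ' ψ'' : ℝ → ℂ,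
        (∀ x ∈ Set.Icc a b,
          HasDerivWithinAt ψn (ψ' x) (Set.Icc a b) x ∧
          HasDerivWithinAt ψ' (ψ'' x) (Set.Icc a b) x ∧
          -(x : ℂ) ^ 2 * ψ'' x - 2 * (x : ℂ) * ψ' x - ψn x / 4
            = ((kn : ℂ)) ^ 2 * ψn x)) ∧
      (∃ x ∈ Set.Icc a b, ψn x ≠ 0) ∧ ψn a = 0 ∧ ψn b = 0) ∧
    ¬ IsDirichletEigenvalue a b 0 := by
  have hL : Real.log (b / a) ≠ 0 := (Real.log_pos ((one_lt_div ha).2 hab)).ne'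
  have eigenfunction (n : ℕ) (hn : 1 ≤ n) :
      IsDirichletEigenfunction a b (((π * n / Real.log (b / a) : ℝ) : ℂ) ^ 2)
        (fun x => ((Real.sin (π * n / Real.log (b / a) * Real.log (x / a)) / √x : ℝ) : ℂ)) :=
    isDirichletEigenfunction_sin_mul_log_div_sqrt ha hab.le hn (by field_simp)
  refine ⟨fun k hk => ⟨exists_nat_of_isDirichletEigenvalue_sq ha hab hk, ?_⟩, eigenfunction,
    not_isDirichletEigenvalue_zero ha hab⟩
  rintro ⟨n, hn, rfl⟩
  exact (eigenfunction n hn).isDirichletEigenvalue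
end
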